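/- arXiv:1306.5657 — 5 statements merged into one kernel-verified Lean document; each statement's English description precedes it below -/
import Mathlib

section
/- Let G be a discrete group acting on a locally compact Hausdorff space X, and let ψ : X → ℝ be a non-negative compactly supported continuous function satisfying ∑_{g ∈ G} ψ(g·x) = 1 for all x ∈ X. Define p : G × X → ℝ by p(g, x) = √(ψ(x) · ψ(g⁻¹·x)). Then p, viewed as an element of the convolution algebra C_c(G, C_0(X)) with product (f₁ * f₂)(g, x) = ∑_{h ∈ G} f₁(h, x) · f₂(h⁻¹g, h⁻¹·x) and involution f*(g, x) = conj(f(g⁻¹, g⁻¹·x)), is a self-adjoint idempotent: p * p = p and p* = p. -/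
/-- The canonical element `p_X(g,x) = √(ψ(x)·ψ(g⁻¹x))` associated to a cut-off function `ψ`
on a `G`-space `X` is a self-adjoint idempotent in the convolution algebra `C_c(G, C_0(X))`
with product `(f₁ * f₂)(g,x) = ∑_{h} f₁(h,x)·f₂(h⁻¹g, h⁻¹x)` and involution
`f*(g,x) = conj (f (g⁻¹, g⁻¹x))`. -/
theorem stmt0 {G X : Type*} [Group G] [TopologicalSpace X] [MulAction G X]
    (ψ : X → ℝ) (hcont : Continuous ψ) (hsupp : HasCompactSupport ψ)
    (hpos : ∀ x, 0 ≤ ψ x) (hsum : ∀ x : X, ∑ᶠ g : G, ψ (g • x) = 1)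
    (p : G → X → ℂ) (hp : ∀ (g : G) (x : X), p g x = (Real.sqrt (ψ x * ψ (g⁻¹ • x)) : ℝ)) :
    (∀ (g : G) (x : X), ∑ᶠ h : G, p h x * p (h⁻¹ * g) (h⁻¹ • x) = p g x) ∧
    (∀ (g : G) (x : X), (starRingEnd ℂ) (p g⁻¹ (g⁻¹ • x)) = p g x) := by
  have hfin : ∀ x : X, (Function.support fun g : G => ψ (g • x)).Finite := by
    intro x
    by_contra h
    have := finsum_of_infinite_support h
    rw [hsum x] at this
    exact one_ne_zero this
  constructor
  · intro g x
    have key : ∀ h : G, p h x * p (h⁻¹ * g) (h⁻¹ • x)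
        = ((Real.sqrt (ψ x * ψ (g⁻¹ • x)) * ψ (h⁻¹ • x) : ℝ) : ℂ) := by
      intro h
      rw [hp, hp]
      have hx : (h⁻¹ * g)⁻¹ • h⁻¹ • x = g⁻¹ • x := by
        rw [smul_smul]; congr 1; group
      rw [hx, ← Complex.ofReal_mul]
      congr 1
      rw [Real.sqrt_mul (hpos x), Real.sqrt_mul (hpos x), Real.sqrt_mul (hpos _)]
      rw [show Real.sqrt (ψ x) * Real.sqrt (ψ (h⁻¹ • x)) *
          (Real.sqrt (ψ (h⁻¹ • x)) * Real.sqrt (ψ (g⁻¹ • x)))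
        = Real.sqrt (ψ x) * Real.sqrt (ψ (g⁻¹ • x)) *
          (Real.sqrt (ψ (h⁻¹ • x)) * Real.sqrt (ψ (h⁻¹ • x))) by ring]
      rw [Real.mul_self_sqrt (hpos _)]
    rw [finsum_congr key]
    have hfin' : (Function.support fun h : G =>
        Real.sqrt (ψ x * ψ (g⁻¹ • x)) * ψ (h⁻¹ • x)).Finite := by
      apply Set.Finite.subset (((hfin x).image (·⁻¹)))
      intro h hh
      simp only [Function.mem_support] at hh
      exact ⟨h⁻¹, by simpa using right_ne_zero_of_mul hh, by simp⟩
    have hsum1 : ∑ᶠ h : G, ψ (h⁻¹ • x) = 1 :=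
      (finsum_comp_equiv (Equiv.inv G) (f := fun k : G => ψ (k • x))).trans (hsum x)
    have hreal : ∑ᶠ h : G, Real.sqrt (ψ x * ψ (g⁻¹ • x)) * ψ (h⁻¹ • x)
        = Real.sqrt (ψ x * ψ (g⁻¹ • x)) := by
      rw [← mul_finsum' _ _ (by
        apply Set.Finite.subset ((hfin x).image (·⁻¹))
        intro h hh
        exact ⟨h⁻¹, by simpa using hh, by simp⟩), hsum1, mul_one]
    rw [hp]
    exact (AddMonoidHom.map_finsum Complex.ofRealHom.toAddMonoidHom hfin').symm.trans
      (congrArg Complex.ofReal hreal)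
  · intro g x
    rw [hp, hp]
    have : (g⁻¹)⁻¹ • g⁻¹ • x = x := by simp [smul_smul]
    rw [this, Complex.conj_ofReal, mul_comm]
end

section
/- Let G be a discrete group acting properly and cocompactly on a locally compact Hausdorff space X. Then there exists a non-negative continuous compactly supported function ψ : X → ℝ such that for every x ∈ X, ∑_{g ∈ G} ψ(g·x) = 1 (the sum having only finitely many nonzero terms). -/
/-- Existence of a cut-off function for a proper, cocompact action of a countable discrete
group `G` on a locally compact Hausdorff space `X`: a non-negative continuous compactly
supported `ψ` with `∑_{g∈G} ψ(g·x) = 1` for every `x` (the sum having finitely many nonzero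
terms). Properness is expressed by: for all compact `K, L ⊆ X`, only finitely many `g ∈ G`
satisfy `gK ∩ L ≠ ∅`; cocompactness by the existence of a compact set meeting every orbit. -/
theorem stmt1 {G X : Type*} [Group G] [Countable G] [TopologicalSpace X]
    [LocallyCompactSpace X] [T2Space X] [MulAction G X]
    (hc : ∀ g : G, Continuous fun x : X => g • x)
    (hproper : ∀ K L : Set X, IsCompact K → IsCompact L →
      Set.Finite {g : G | ((fun x => g • x) '' K ∩ L).Nonempty})
    (hcocompact : ∃ K : Set X, IsCompact K ∧ ∀ x : X, ∃ g : G, g • x ∈ K) :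
    ∃ ψ : X → ℝ, Continuous ψ ∧ HasCompactSupport ψ ∧ (∀ x, 0 ≤ ψ x) ∧
      (∀ x : X, (Function.support fun g : G => ψ (g • x)).Finite) ∧
      (∀ x : X, ∑ᶠ g : G, ψ (g • x) = 1) := by
  obtain ⟨K, hK, hKorb⟩ := hcocompact
  obtain ⟨φ₀, hφ₀K, -, hφ₀supp, hφ₀mem⟩ :=
    exists_continuous_one_zero_of_isCompact hK isClosed_empty (Set.disjoint_empty K)
  set φ : X → ℝ := fun x => φ₀ x with hφ
  have hφcont : Continuous φ := φ₀.continuous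
  have hφnn : ∀ x, 0 ≤ φ x := fun x => (hφ₀mem x).1
  -- finiteness of support in `g`, for any compact set of base points
  have key : ∀ N : Set X, IsCompact N →
      {g : G | ∃ y ∈ N, φ (g • y) ≠ 0}.Finite := by
    intro N hN
    refine (hproper N (tsupport φ) hN hφ₀supp).subset ?_
    rintro g ⟨y, hyN, hy⟩
    exact ⟨g • y, ⟨y, hyN, rfl⟩, subset_tsupport φ hy⟩
  have hfin : ∀ x : X, (Function.support fun g : G => φ (g • x)).Finite := by
    intro x
    refine (key {x} isCompact_singleton).subset ?_
    intro g hg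
    exact ⟨x, rfl, hg⟩
  -- local finiteness
  have hlf : LocallyFinite fun g : G => Function.support fun y : X => φ (g • y) := by
    intro x
    obtain ⟨N, hN, hNx⟩ := exists_compact_mem_nhds x
    refine ⟨N, hNx, ?_⟩
    refine (key N hN).subset ?_
    rintro g ⟨y, hy1, hy2⟩
    exact ⟨y, hy2, hy1⟩
  set Φ : X → ℝ := fun x => ∑ᶠ g : G, φ (g • x) with hΦ
  have hΦcont : Continuous Φ :=
    continuous_finsum (fun g => hφcont.comp (hc g)) hlf
  have hΦinv : ∀ (g : G) (x : X), Φ (g • x) = Φ x := by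
    intro g x
    have := finsum_comp (g := fun h : G => φ (h • x)) (fun h : G => h * g)
      (Group.mulRight_bijective g)
    simp only [hΦ]
    rw [← this]
    simp [mul_smul]
  have hΦpos : ∀ x, 0 < Φ x := by
    intro x
    obtain ⟨g, hg⟩ := hKorb x
    have h1 : (1 : ℝ) ≤ Φ x := by
      have := single_le_finsum g (hfin x) (fun h => hφnn (h • x))
      rw [show φ (g • x) = 1 from hφ₀K hg] at this
      exact this
    linarith
  refine ⟨fun x => φ x / Φ x, hφcont.div hΦcont fun x => (hΦpos x).ne', ?_, ?_, ?_, ?_⟩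
  · apply hφ₀supp.mono
    intro x hx
    simp only [Function.mem_support] at hx ⊢
    intro h
    exact hx (div_eq_zero_iff.mpr (Or.inl h))
  · intro x
    exact div_nonneg (hφnn x) (hΦpos x).le
  · intro x
    refine (hfin x).subset ?_
    intro g hg
    simp only [Function.mem_support] at hg ⊢
    intro h
    exact hg (by rw [h, zero_div])
  · intro x
    have : (fun g : G => φ (g • x) / Φ (g • x)) = fun g : G => φ (g • x) * (Φ x)⁻¹ := by
      funext g
      rw [hΦinv g x, div_eq_mul_inv]
    rw [this, ← finsum_mul _ _]
    exact mul_inv_cancel₀ (hΦpos x).ne'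
end

section
/- Let G be a discrete group acting properly and cocompactly on X, with cut-off function ψ and Θ = √ψ. Define Φ : C_c(X) → C_c(G × X) by Φ(φ) = ⟨Θ, φ⟩_R, i.e. Φ(φ)(g, x) = √(ψ(x)) · φ(g⁻¹·x). Then Φ preserves the C_c(G × X)-valued inner products: ⟨Φ(φ), Φ(φ')⟩ = ⟨φ, φ'⟩_R for all φ, φ' ∈ C_c(X), where the inner product on C_c(G × X) is ⟨α, β⟩ = α* * β with the crossed product convolution and involution. -/
/-- The map `Φ : C_c(X) → C_c(G×X)`, `Φ(φ)(g,x) = √(ψ(x))·φ(g⁻¹x)` (that is,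
`Φ(φ) = ⟨Θ, φ⟩_R` with `Θ = √ψ`) preserves the `C_c(G×X)`-valued inner products:
`⟨Φ(φ), Φ(φ')⟩ = ⟨φ, φ'⟩_R`, where on `C_c(G×X)` the inner product is `⟨α, β⟩ = α* * β`
with the crossed-product convolution and involution, and
`⟨φ, φ'⟩_R(g,x) = conj(φ(x))·φ'(g⁻¹x)`. -/
theorem stmt14 {G X : Type*} [Group G] [TopologicalSpace X] [MulAction G X]
    (ψ : X → ℝ) (hcont : Continuous ψ) (hsupp : HasCompactSupport ψ)
    (hpos : ∀ x, 0 ≤ ψ x) (hsum : ∀ x : X, ∑ᶠ g : G, ψ (g • x) = 1)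
    (φ φ' : X → ℂ)
    (Φ : (X → ℂ) → G → X → ℂ)
    (hΦ : ∀ (χ : X → ℂ) (g : G) (x : X),
      Φ χ g x = ((Real.sqrt (ψ x) : ℝ) : ℂ) * χ (g⁻¹ • x)) :
    ∀ (g : G) (x : X),
      ∑ᶠ h : G, (starRingEnd ℂ) (Φ φ h⁻¹ (h⁻¹ • x)) * Φ φ' (h⁻¹ * g) (h⁻¹ • x)
        = (starRingEnd ℂ) (φ x) * φ' (g⁻¹ • x) := by
  intro g x
  have key : ∀ h : G,
      (starRingEnd ℂ) (Φ φ h⁻¹ (h⁻¹ • x)) * Φ φ' (h⁻¹ * g) (h⁻¹ • x)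
        = ψ (h⁻¹ • x) • ((starRingEnd ℂ) (φ x) * φ' (g⁻¹ • x)) := by
    intro h
    rw [hΦ, hΦ]
    have h1 : (h⁻¹)⁻¹ • h⁻¹ • x = x := by simp [smul_smul]
    have h2 : (h⁻¹ * g)⁻¹ • h⁻¹ • x = g⁻¹ • x := by
      rw [smul_smul]; group
    rw [h1, h2, map_mul, Complex.conj_ofReal]
    have hψ : ((ψ (h⁻¹ • x) : ℝ) : ℂ)
        = ((Real.sqrt (ψ (h⁻¹ • x)) : ℝ) : ℂ) * ((Real.sqrt (ψ (h⁻¹ • x)) : ℝ) : ℂ) := by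
      rw [← Complex.ofReal_mul, Real.mul_self_sqrt (hpos (h⁻¹ • x))]
    rw [Complex.real_smul, hψ]
    ring
  rw [finsum_congr key, ← finsum_smul]
  have : (∑ᶠ h : G, ψ (h⁻¹ • x)) = 1 := by
    rw [finsum_comp (g := fun h : G => ψ (h • x)) (fun h : G => h⁻¹)
      (Equiv.inv G).bijective, hsum]
  rw [this, one_smul]
end

section
/- Let G be a discrete group acting freely and properly on X with cut-off function ψ and projection p_X. Then the corner p_X * C_c(G × X) * p_X is isomorphic as a *-algebra to a dense subalgebra of C(X/G): explicitly, the map sending a G-invariant function F ∈ C_b(X)^G (identified with C(X/G)) to the element m_F(g, x) = F(x)·p_X(g, x) is an injective *-homomorphism from C(X/G) into the corner, satisfying m_F * m_{F'} = m_{F·F'} and m_F* = m_{conj(F)}. -/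
/-- For a free, proper, cocompact action with cut-off function `ψ` and projection `p_X`,
the map sending a `G`-invariant continuous bounded function `F` (i.e. an element of
`C(X/G)`) to `m_F(g,x) = F(x)·p_X(g,x)` is an injective *-homomorphism into the corner
`p_X * C_c(G×X) * p_X`: it satisfies `m_F * m_{F'} = m_{F·F'}`, `m_F* = m_{conj F}`,
and `p_X * m_F * p_X = m_F`. -/
theorem stmt17 {G X : Type*} [Group G] [TopologicalSpace X] [MulAction G X]
    (hfree : ∀ (g : G) (x : X), g • x = x → g = 1)
    (ψ : X → ℝ) (hcont : Continuous ψ) (hsupp : HasCompactSupport ψ)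
    (hpos : ∀ x, 0 ≤ ψ x) (hsum : ∀ x : X, ∑ᶠ g : G, ψ (g • x) = 1)
    (p : G → X → ℂ)
    (hp : ∀ (g : G) (x : X), p g x = (Real.sqrt (ψ x * ψ (g⁻¹ • x)) : ℝ))
    (m : (X → ℂ) → G → X → ℂ)
    (hm : ∀ (F : X → ℂ) (g : G) (x : X), m F g x = F x * p g x) :
    let conv : (G → X → ℂ) → (G → X → ℂ) → G → X → ℂ :=
      fun a b g x => ∑ᶠ h : G, a h x * b (h⁻¹ * g) (h⁻¹ • x)
    -- injectivity on invariant continuous bounded functions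
    (∀ F F' : X → ℂ, Continuous F → Continuous F' →
      (∃ C : ℝ, ∀ x, ‖F x‖ ≤ C) → (∃ C : ℝ, ∀ x, ‖F' x‖ ≤ C) →
      (∀ (g : G) (x : X), F (g • x) = F x) → (∀ (g : G) (x : X), F' (g • x) = F' x) →
      m F = m F' → F = F') ∧
    -- multiplicativity: m_F * m_{F'} = m_{F·F'}
    (∀ F F' : X → ℂ, (∀ (g : G) (x : X), F (g • x) = F x) →
      (∀ (g : G) (x : X), F' (g • x) = F' x) →
      conv (m F) (m F') = m fun x => F x * F' x) ∧
    -- star-preservation: m_F* = m_{conj F}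
    (∀ F : X → ℂ, (∀ (g : G) (x : X), F (g • x) = F x) →
      ∀ (g : G) (x : X),
        (starRingEnd ℂ) (m F g⁻¹ (g⁻¹ • x)) = m (fun y => (starRingEnd ℂ) (F y)) g x) ∧
    -- the image lies in the corner: p * m_F * p = m_F
    (∀ F : X → ℂ, (∀ (g : G) (x : X), F (g • x) = F x) →
      conv p (conv (m F) p) = m F) := by
  intro conv
  -- finiteness of supports
  have hψfin : ∀ x : X, (Function.support fun g : G => ψ (g • x)).Finite := by
    intro x
    by_contra h
    have h1 := hsum x
    rw [finsum_of_infinite_support h] at h1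
    norm_num at h1
  have hψfin' : ∀ x : X, (Function.support fun g : G => ψ (g⁻¹ • x)).Finite := by
    intro x
    have : (Function.support fun g : G => ψ (g⁻¹ • x))
        = (Equiv.inv G) ⁻¹' (Function.support fun g : G => ψ (g • x)) := by
      ext g; simp [Function.support, Equiv.inv]
    rw [this]
    exact (hψfin x).preimage (Equiv.injective _).injOn
  have hsum_inv : ∀ x : X, ∑ᶠ h : G, ψ (h⁻¹ • x) = 1 := by
    intro x
    rw [← hsum x]
    have := finsum_comp_equiv (Equiv.inv G) (f := fun g : G => ψ (g • x))
    simpa using this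
  have hsum_invC : ∀ x : X, ∑ᶠ h : G, ((ψ (h⁻¹ • x) : ℝ) : ℂ) = 1 := by
    intro x
    have := (Complex.ofRealHom.toAddMonoidHom.map_finsum (f := fun h : G => ψ (h⁻¹ • x))
      (hψfin' x)).symm
    simp only [RingHom.toAddMonoidHom_eq_coe, AddMonoidHom.coe_coe, Complex.ofRealHom_eq_coe]
      at this
    rw [this, hsum_inv x, Complex.ofReal_one]
  -- key sqrt identity
  have hkey : ∀ a b c : ℝ, 0 ≤ a → 0 ≤ b → 0 ≤ c →
      Real.sqrt (a * b) * Real.sqrt (b * c) = b * Real.sqrt (a * c) := by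
    intro a b c ha hb hc
    rw [← Real.sqrt_mul (mul_nonneg ha hb)]
    have : a * b * (b * c) = b * b * (a * c) := by ring
    rw [this, Real.sqrt_mul (mul_nonneg hb hb), Real.sqrt_mul_self hb]
  -- multiplicativity
  have hmul : ∀ F F' : X → ℂ, (∀ (g : G) (x : X), F (g • x) = F x) →
      (∀ (g : G) (x : X), F' (g • x) = F' x) →
      conv (m F) (m F') = m fun x => F x * F' x := by
    intro F F' hF hF'
    funext g x
    show (∑ᶠ h : G, m F h x * m F' (h⁻¹ * g) (h⁻¹ • x)) = _
    have hterm : ∀ h : G, m F h x * m F' (h⁻¹ * g) (h⁻¹ • x)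
        = (F x * F' x * ((Real.sqrt (ψ x * ψ (g⁻¹ • x)) : ℝ) : ℂ)) * ((ψ (h⁻¹ • x) : ℝ) : ℂ) := by
      intro h
      rw [hm, hm, hp, hp]
      have h2 : (h⁻¹ * g)⁻¹ • h⁻¹ • x = g⁻¹ • x := by
        rw [smul_smul]
        congr 1
        group
      rw [hF' h⁻¹ x, h2]
      have h3 : Real.sqrt (ψ x * ψ (h⁻¹ • x)) * Real.sqrt (ψ (h⁻¹ • x) * ψ (g⁻¹ • x))
          = ψ (h⁻¹ • x) * Real.sqrt (ψ x * ψ (g⁻¹ • x)) :=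
        hkey _ _ _ (hpos _) (hpos _) (hpos _)
      calc F x * ↑(Real.sqrt (ψ x * ψ (h⁻¹ • x)))
            * (F' x * ↑(Real.sqrt (ψ (h⁻¹ • x) * ψ (g⁻¹ • x))))
          = F x * F' x * ((Real.sqrt (ψ x * ψ (h⁻¹ • x))
              * Real.sqrt (ψ (h⁻¹ • x) * ψ (g⁻¹ • x)) : ℝ) : ℂ) := by
            push_cast; ring
        _ = _ := by rw [h3]; push_cast; ring
    rw [finsum_congr hterm, ← mul_finsum' _ _ (by
      apply (hψfin' x).subset
      intro h hh
      simp only [Function.mem_support, ne_eq, Complex.ofReal_eq_zero] at hh ⊢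
      exact hh), hsum_invC x, mul_one, hm, hp]
  refine ⟨?_, hmul, ?_, ?_⟩
  · -- injectivity
    intro F F' _ _ _ _ hF hF' heq
    funext x
    -- find h with ψ (h • x) ≠ 0
    have hex : ∃ h : G, ψ (h • x) ≠ 0 := by
      by_contra hc
      push_neg at hc
      have h1 := hsum x
      rw [finsum_congr hc, finsum_zero] at h1
      norm_num at h1
    obtain ⟨h, hh⟩ := hex
    have h1 : m F 1 (h • x) = m F' 1 (h • x) := by rw [heq]
    rw [hm, hm, hp] at h1
    have h2 : (1 : G)⁻¹ • h • x = h • x := by simp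
    rw [h2, Real.sqrt_mul_self (hpos _)] at h1
    have h3 : ((ψ (h • x) : ℝ) : ℂ) ≠ 0 := by exact_mod_cast hh
    have h4 : F (h • x) = F' (h • x) := mul_right_cancel₀ h3 h1
    rw [hF h x, hF' h x] at h4
    exact h4
  · -- star
    intro F hF g x
    rw [hm, hm, hp, hp]
    have h1 : g⁻¹⁻¹ • g⁻¹ • x = x := by simp
    rw [h1, hF g⁻¹ x]
    rw [map_mul, Complex.conj_ofReal, mul_comm (ψ (g⁻¹ • x)) (ψ x)]
  · -- corner
    intro F hF
    have hone : ∀ (g : G) (x : X), (fun y : X => (1 : ℂ)) (g • x) = (fun y : X => (1 : ℂ)) x :=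
      fun _ _ => rfl
    have hpm : p = m fun _ => (1 : ℂ) := by
      funext g x
      rw [hm, one_mul]
    have e1 : conv (m F) p = m F := by
      rw [hpm, hmul F _ hF hone]
      funext g x
      rw [hm, hm, mul_one]
    have e2 : conv p (m F) = m F := by
      rw [hpm, hmul _ F hone hF]
      funext g x
      rw [hm, hm, one_mul]
    rw [e1, e2]
end

section
/- Let G be a finite group acting freely on a finite set X (so all structures are finite-dimensional). Let A = Map(X, ℂ) ⋊ G be the crossed product algebra (functions X → ℂ twisted by the G-action), ψ : X → ℝ≥0 a cut-off function (∑_g ψ(g·x) = 1), and p(g, x) = √(ψ(x)ψ(g⁻¹x)). Then p is a projection in A, and the map f ↦ (the element (g,x) ↦ f([x])·p(g,x)) defines an algebra isomorphism from Map(X/G, ℂ) onto the corner pAp. -/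
private lemma sqrt3 (a b c : ℝ) (ha : 0 ≤ a) (hb : 0 ≤ b) :
    Real.sqrt (a*b) * Real.sqrt (b*c) = b * Real.sqrt (a*c) := by
  rw [Real.sqrt_mul ha, Real.sqrt_mul hb, Real.sqrt_mul ha]
  have h : Real.sqrt b * Real.sqrt b = b := Real.mul_self_sqrt hb
  calc Real.sqrt a * Real.sqrt b * (Real.sqrt b * Real.sqrt c)
      = (Real.sqrt b * Real.sqrt b) * (Real.sqrt a * Real.sqrt c) := by ring
    _ = b * (Real.sqrt a * Real.sqrt c) := by rw [h]

private lemma sqrt4 (a b c d : ℝ) (ha : 0 ≤ a) (hb : 0 ≤ b) (hc : 0 ≤ c) :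
    Real.sqrt (a*b) * Real.sqrt (c*d) = Real.sqrt (a*d) * Real.sqrt (b*c) := by
  rw [Real.sqrt_mul ha, Real.sqrt_mul hc, Real.sqrt_mul ha, Real.sqrt_mul hb]
  ring



/-- The finite model of the Morita equivalence `C_0(X) ⋊ G ∼ C_0(X/G)` for free actions:
for a finite group `G` acting freely on a finite set `X`, with cut-off function `ψ` and
`p(g,x) = √(ψ(x)·ψ(g⁻¹x))`, the element `p` is a (self-adjoint) projection in the crossed
product `A = Map(X,ℂ) ⋊ G`, and `f ↦ ((g,x) ↦ f([x])·p(g,x))` is an algebra isomorphism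
from `Map(X/G, ℂ)` onto the corner `pAp`. -/
theorem stmt19 {G X : Type*} [Group G] [Fintype G] [Fintype X] [MulAction G X]
    (hfree : ∀ (g : G) (x : X), g • x = x → g = 1)
    (ψ : X → ℝ) (hpos : ∀ x, 0 ≤ ψ x) (hsum : ∀ x : X, ∑ g : G, ψ (g • x) = 1)
    (p : G → X → ℂ)
    (hp : ∀ (g : G) (x : X), p g x = (Real.sqrt (ψ x * ψ (g⁻¹ • x)) : ℝ))
    (Φ : (Quotient (MulAction.orbitRel G X) → ℂ) → G → X → ℂ)
    (hΦ : ∀ (f : Quotient (MulAction.orbitRel G X) → ℂ) (g : G) (x : X),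
      Φ f g x = f (Quotient.mk (MulAction.orbitRel G X) x) * p g x) :
    let conv : (G → X → ℂ) → (G → X → ℂ) → G → X → ℂ :=
      fun a b g x => ∑ h : G, a h x * b (h⁻¹ * g) (h⁻¹ • x)
    -- `p` is a projection
    (∀ (g : G) (x : X), conv p p g x = p g x) ∧
    (∀ (g : G) (x : X), (starRingEnd ℂ) (p g⁻¹ (g⁻¹ • x)) = p g x) ∧
    -- `Φ` is an injective algebra homomorphism
    Function.Injective Φ ∧
    (∀ f f' : Quotient (MulAction.orbitRel G X) → ℂ,
      conv (Φ f) (Φ f') = Φ fun q => f q * f' q) ∧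
    (∀ f f' : Quotient (MulAction.orbitRel G X) → ℂ,
      Φ (fun q => f q + f' q) = fun g x => Φ f g x + Φ f' g x) ∧
    -- its image is exactly the corner `pAp`
    (∀ f : Quotient (MulAction.orbitRel G X) → ℂ, conv p (conv (Φ f) p) = Φ f) ∧
    (∀ a : G → X → ℂ, ∃ f : Quotient (MulAction.orbitRel G X) → ℂ,
      Φ f = conv p (conv a p)) := by
  intro conv
  -- sum of ψ over inverse translates
  have hsum' : ∀ x : X, ∑ h : G, ψ (h⁻¹ • x) = 1 := by
    intro x
    rw [← hsum x]
    exact Fintype.sum_equiv (Equiv.inv G) (fun h => ψ (h⁻¹ • x)) (fun h => ψ (h • x))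
      (fun h => rfl)
  -- orbit classes are invariant
  have hmk : ∀ (h : G) (x : X),
      Quotient.mk (MulAction.orbitRel G X) (h • x) = Quotient.mk (MulAction.orbitRel G X) x :=
    fun h x => Quotient.sound (MulAction.mem_orbit x h)
  -- smul computation
  have hsm : ∀ (h g : G) (x : X), (h⁻¹ * g)⁻¹ • h⁻¹ • x = g⁻¹ • x := by
    intro h g x
    rw [smul_smul]
    congr 1
    group
  -- p is a projection
  have hproj : ∀ (g : G) (x : X), (∑ h : G, p h x * p (h⁻¹ * g) (h⁻¹ • x)) = p g x := by
    intro g x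
    have hterm : ∀ h : G, p h x * p (h⁻¹ * g) (h⁻¹ • x)
        = ((ψ (h⁻¹ • x) : ℝ) : ℂ) * p g x := by
      intro h
      rw [hp, hp, hp, hsm, ← Complex.ofReal_mul, ← Complex.ofReal_mul,
        sqrt3 _ _ _ (hpos x) (hpos _), Complex.ofReal_mul]
    rw [Finset.sum_congr rfl (fun h _ => hterm h), ← Finset.sum_mul]
    norm_cast
    rw [hsum' x, Complex.ofReal_one, one_mul]
  have hprojc : ∀ (g : G) (x : X), conv p p g x = p g x := hproj
  -- left and right multiplication by p fixes the image of Φ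
  have hright : ∀ f, conv (Φ f) p = Φ f := by
    intro f
    funext g x
    show (∑ h : G, Φ f h x * p (h⁻¹ * g) (h⁻¹ • x)) = Φ f g x
    calc (∑ h : G, Φ f h x * p (h⁻¹ * g) (h⁻¹ • x))
        = ∑ h : G, f (Quotient.mk (MulAction.orbitRel G X) x) * (p h x * p (h⁻¹ * g) (h⁻¹ • x)) := by
          refine Finset.sum_congr rfl fun h _ => by rw [hΦ]; ring
      _ = f (Quotient.mk (MulAction.orbitRel G X) x) * ∑ h : G, p h x * p (h⁻¹ * g) (h⁻¹ • x) := by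
          rw [Finset.mul_sum]
      _ = Φ f g x := by rw [hproj, hΦ]
  have hleft : ∀ f, conv p (Φ f) = Φ f := by
    intro f
    funext g x
    show (∑ h : G, p h x * Φ f (h⁻¹ * g) (h⁻¹ • x)) = Φ f g x
    calc (∑ h : G, p h x * Φ f (h⁻¹ * g) (h⁻¹ • x))
        = ∑ h : G, f (Quotient.mk (MulAction.orbitRel G X) x) * (p h x * p (h⁻¹ * g) (h⁻¹ • x)) := by
          refine Finset.sum_congr rfl fun h _ => by
            rw [hΦ]
            have : (h⁻¹ • x : X) = h⁻¹ • x := rfl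
            rw [show Quotient.mk (MulAction.orbitRel G X) (h⁻¹ • x)
              = Quotient.mk (MulAction.orbitRel G X) x from hmk h⁻¹ x]
            ring
      _ = f (Quotient.mk (MulAction.orbitRel G X) x) * ∑ h : G, p h x * p (h⁻¹ * g) (h⁻¹ • x) := by
          rw [Finset.mul_sum]
      _ = Φ f g x := by rw [hproj, hΦ]
  refine ⟨hprojc, ?_, ?_, ?_, ?_, ?_, ?_⟩
  · -- self-adjointness
    intro g x
    rw [hp, hp, Complex.conj_ofReal]
    congr 1
    rw [inv_inv, smul_inv_smul, mul_comm]
  · -- injectivity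
    intro f f' hff
    funext q
    induction q using Quotient.ind with
    | _ x =>
      have h1 : (∑ g : G, ψ (g • x)) ≠ 0 := by rw [hsum x]; norm_num
      obtain ⟨g, -, hg⟩ := Finset.exists_ne_zero_of_sum_ne_zero h1
      have h2 : Φ f 1 (g • x) = Φ f' 1 (g • x) := by rw [hff]
      rw [hΦ, hΦ, hmk g x] at h2
      have hψ : p 1 (g • x) = ((ψ (g • x) : ℝ) : ℂ) := by
        rw [hp, inv_one, one_smul, Real.sqrt_mul_self (hpos _)]
      rw [hψ] at h2
      have : ((ψ (g • x) : ℝ) : ℂ) ≠ 0 := by exact_mod_cast hg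
      exact mul_right_cancel₀ this h2
  · -- multiplicativity
    intro f f'
    funext g x
    show (∑ h : G, Φ f h x * Φ f' (h⁻¹ * g) (h⁻¹ • x)) = _
    calc (∑ h : G, Φ f h x * Φ f' (h⁻¹ * g) (h⁻¹ • x))
        = ∑ h : G, (f (Quotient.mk (MulAction.orbitRel G X) x) *
            f' (Quotient.mk (MulAction.orbitRel G X) x)) * (p h x * p (h⁻¹ * g) (h⁻¹ • x)) := by
          refine Finset.sum_congr rfl fun h _ => by
            rw [hΦ, hΦ, hmk h⁻¹ x]; ring
      _ = (f (Quotient.mk (MulAction.orbitRel G X) x) *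
            f' (Quotient.mk (MulAction.orbitRel G X) x)) *
            ∑ h : G, p h x * p (h⁻¹ * g) (h⁻¹ • x) := by rw [Finset.mul_sum]
      _ = _ := by rw [hproj, hΦ]
  · -- additivity
    intro f f'
    funext g x
    rw [hΦ, hΦ, hΦ]
    ring
  · -- corner fixes image
    intro f
    rw [hright, hleft]
  · -- surjectivity onto the corner
    intro a
    set F : X → ℂ := fun x => ∑ h : G, ∑ j : G,
      ((Real.sqrt (ψ (h⁻¹ • x) * ψ (j⁻¹ • h⁻¹ • x)) : ℝ) : ℂ) * a j (h⁻¹ • x) with hF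
    have hinv : ∀ (s : G) (x : X), F (s • x) = F x := by
      intro s x
      refine Fintype.sum_equiv (Equiv.mulLeft s)
        (fun h => ∑ j : G, ((Real.sqrt (ψ (h⁻¹ • x) * ψ (j⁻¹ • h⁻¹ • x)) : ℝ) : ℂ) * a j (h⁻¹ • x))
        (fun h => ∑ j : G, ((Real.sqrt (ψ (h⁻¹ • s • x) * ψ (j⁻¹ • h⁻¹ • s • x)) : ℝ) : ℂ) * a j (h⁻¹ • s • x))
        (fun h => ?_) |>.symm
      have he : ((Equiv.mulLeft s) h)⁻¹ • s • x = h⁻¹ • x := by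
        simp [smul_smul, mul_assoc]
      simp only [he]
    have hFwd : ∀ x y, (MulAction.orbitRel G X).r x y → F x = F y := by
      intro x y hxy
      obtain ⟨s, rfl⟩ := hxy
      exact hinv s y
    refine ⟨Quotient.lift F hFwd, ?_⟩
    funext g x
    show Φ _ g x = ∑ h : G, p h x * (∑ j : G, a j (h⁻¹ • x) * p (j⁻¹ * (h⁻¹ * g)) (j⁻¹ • h⁻¹ • x))
    have hterm : ∀ h j : G,
        p h x * (a j (h⁻¹ • x) * p (j⁻¹ * (h⁻¹ * g)) (j⁻¹ • h⁻¹ • x))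
        = (((Real.sqrt (ψ (h⁻¹ • x) * ψ (j⁻¹ • h⁻¹ • x)) : ℝ) : ℂ) * a j (h⁻¹ • x)) * p g x := by
      intro h j
      have hs2 : (j⁻¹ * (h⁻¹ * g))⁻¹ • j⁻¹ • h⁻¹ • x = g⁻¹ • x := by
        rw [smul_smul, smul_smul]
        congr 1
        group
      rw [hp, hp, hp, hs2]
      have hr := sqrt4 (ψ x) (ψ (h⁻¹ • x)) (ψ (j⁻¹ • h⁻¹ • x)) (ψ (g⁻¹ • x))
        (hpos _) (hpos _) (hpos _)
      have hc : ((Real.sqrt (ψ x * ψ (h⁻¹ • x)) : ℝ) : ℂ)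
          * ((Real.sqrt (ψ (j⁻¹ • h⁻¹ • x) * ψ (g⁻¹ • x)) : ℝ) : ℂ)
          = ((Real.sqrt (ψ x * ψ (g⁻¹ • x)) : ℝ) : ℂ)
          * ((Real.sqrt (ψ (h⁻¹ • x) * ψ (j⁻¹ • h⁻¹ • x)) : ℝ) : ℂ) := by
        rw [← Complex.ofReal_mul, ← Complex.ofReal_mul, hr]
      linear_combination (a j (h⁻¹ • x)) * hc
    calc Φ (Quotient.lift F hFwd) g x = F x * p g x := by rw [hΦ]; rfl
      _ = (∑ h : G, ∑ j : G,
            ((Real.sqrt (ψ (h⁻¹ • x) * ψ (j⁻¹ • h⁻¹ • x)) : ℝ) : ℂ) * a j (h⁻¹ • x)) * p g x := rfl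
      _ = ∑ h : G, ∑ j : G,
            (((Real.sqrt (ψ (h⁻¹ • x) * ψ (j⁻¹ • h⁻¹ • x)) : ℝ) : ℂ) * a j (h⁻¹ • x)) * p g x := by
          rw [Finset.sum_mul]; exact Finset.sum_congr rfl fun h _ => by rw [Finset.sum_mul]
      _ = ∑ h : G, ∑ j : G, p h x * (a j (h⁻¹ • x) * p (j⁻¹ * (h⁻¹ * g)) (j⁻¹ • h⁻¹ • x)) := by
          exact Finset.sum_congr rfl fun h _ => Finset.sum_congr rfl fun j _ => (hterm h j).symm
      _ = ∑ h : G, p h x * (∑ j : G, a j (h⁻¹ • x) * p (j⁻¹ * (h⁻¹ * g)) (j⁻¹ • h⁻¹ • x)) := by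
          exact Finset.sum_congr rfl fun h _ => (Finset.mul_sum _ _ _).symm
end
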